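/- Assume b, c > 0 and b² - 24ac > 0. Let s = (b + √(b²-24ac))/(4c) (or s = (b - √(b²-24ac))/(4c)), fix n₁, n₂ with n₁² + n₂² = 1 and let n(t) = (n₁cos t + n₂ sin t, -n₁ sin t + n₂ cos t, 0). Then Q(t) = s(n(t)⊗n(t) - (1/3)Id) is a periodic solution of dQ/dt = [W,Q] - (aQ - b(Q² - (1/3)|Q|²Id) + cQ|Q|²), with period 2π. -/

import Mathlib

/-!
Write `Q = s • (P - (1/3) • 1)` with `P = n nᵀ`. As `n` is a unit vector, `P² = P` and
`tr P = 1`, so the bulk gradient at `Q` is `(s/3)(2cs² - bs + 3a) • (P - (1/3) • 1)`, which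
vanishes because `s` is a root of `2cX² - bX + 3a`. The director rotates as `n' = W n` with
`W` skew, hence `P' = W P - P W` and `Q' = [W, Q]`.
-/

open Matrix Real

noncomputable def Wmat : Matrix (Fin 3) (Fin 3) ℝ :=
  !![0, 1, 0; -1, 0, 0; 0, 0, 0]

/-- The gradient of the Landau–de Gennes bulk potential. -/
noncomputable def gradF (a b c : ℝ) (Q : Matrix (Fin 3) (Fin 3) ℝ) :
    Matrix (Fin 3) (Fin 3) ℝ :=
  a • Q - b • (Q * Q - ((1 / 3 : ℝ) * Matrix.trace (Q * Q)) • (1 : Matrix (Fin 3) (Fin 3) ℝ))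
    + (c * Matrix.trace (Q * Q)) • Q

theorem two_mul_sq_sub_mul_add_three_mul_eq_zero {a b c s : ℝ} (hc : c ≠ 0)
    (hdisc : 0 ≤ b ^ 2 - 24 * a * c)
    (hs : s = (b + √(b ^ 2 - 24 * a * c)) / (4 * c) ∨
          s = (b - √(b ^ 2 - 24 * a * c)) / (4 * c)) :
    2 * c * s ^ 2 - b * s + 3 * a = 0 := by
  have hdiscrim : discrim (2 * c) (-b) (3 * a) =
      √(b ^ 2 - 24 * a * c) * √(b ^ 2 - 24 * a * c) := by
    rw [mul_self_sqrt hdisc, discrim]; ring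
  have hroot := (quadratic_eq_zero_iff (by positivity) hdiscrim s).mpr
    (by convert hs using 2 <;> ring)
  linear_combination hroot

namespace Matrix

theorem hasDerivAt_vecMulVec_self_apply {ι : Type*} {v : ℝ → ι → ℝ} {v' : ι → ℝ} {t : ℝ}
    (hv : ∀ k, HasDerivAt (fun u => v u k) (v' k) t) (i j : ι) :
    HasDerivAt (fun u => vecMulVec (v u) (v u) i j)
      ((vecMulVec v' (v t) + vecMulVec (v t) v') i j) t :=
  (hv i).mul (hv j)

variable {ι : Type*} [Fintype ι]

theorem vecMulVec_self_mul_self {v : ι → ℝ} (hv : v ⬝ᵥ v = 1) :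
    vecMulVec v v * vecMulVec v v = vecMulVec v v := by
  rw [vecMulVec_mul_vecMulVec, hv, one_smul]

theorem mul_vecMulVec_self_sub_of_transpose_eq_neg {A : Matrix ι ι ℝ} (hA : Aᵀ = -A)
    (v : ι → ℝ) :
    A * vecMulVec v v - vecMulVec v v * A = vecMulVec (A *ᵥ v) v + vecMulVec v (A *ᵥ v) := by
  rw [mul_vecMulVec, vecMulVec_mul, ← mulVec_transpose, hA, neg_mulVec]
  ext i j
  simp [vecMulVec_apply]

theorem commutator_smul_sub_smul_one [DecidableEq ι] (A P : Matrix ι ι ℝ) (s r : ℝ) :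
    A * (s • (P - r • 1)) - s • (P - r • 1) * A = s • (A * P - P * A) := by
  simp only [mul_smul_comm, smul_mul_assoc, mul_sub, sub_mul, mul_one, one_mul]
  module

end Matrix

theorem gradF_smul_sub_third_eq_zero {a b c s : ℝ} {P : Matrix (Fin 3) (Fin 3) ℝ}
    (hPP : P * P = P) (hP : trace P = 1) (hs : 2 * c * s ^ 2 - b * s + 3 * a = 0) :
    gradF a b c (s • (P - (1 / 3 : ℝ) • 1)) = 0 := by
  have hsq : s • (P - (1 / 3 : ℝ) • 1) * (s • (P - (1 / 3 : ℝ) • 1))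
      = (s ^ 2 / 3) • P + (s ^ 2 / 9) • 1 := by
    simp only [mul_smul_comm, smul_mul_assoc, mul_sub, sub_mul, mul_one, one_mul, hPP]
    module
  have htr : trace (s • (P - (1 / 3 : ℝ) • 1) * (s • (P - (1 / 3 : ℝ) • 1)))
      = 2 / 3 * s ^ 2 := by
    simp only [hsq, trace_add, trace_smul, hP, trace_one, Fintype.card_fin, smul_eq_mul]
    ring
  have hgrad : gradF a b c (s • (P - (1 / 3 : ℝ) • 1))
      = (s / 3 * (2 * c * s ^ 2 - b * s + 3 * a)) • (P - (1 / 3 : ℝ) • 1) := by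
    rw [gradF, htr, hsq]
    module
  rw [hgrad, hs, mul_zero, zero_smul]

noncomputable def rotatingDirector (n₁ n₂ t : ℝ) : Fin 3 → ℝ :=
  ![n₁ * cos t + n₂ * sin t, -n₁ * sin t + n₂ * cos t, 0]

theorem rotatingDirector_dotProduct_self {n₁ n₂ : ℝ} (hn : n₁ ^ 2 + n₂ ^ 2 = 1) (t : ℝ) :
    rotatingDirector n₁ n₂ t ⬝ᵥ rotatingDirector n₁ n₂ t = 1 := by
  simp only [rotatingDirector, dotProduct, Fin.sum_univ_three, cons_val_zero, cons_val_one,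
    cons_val_two, head_cons, tail_cons]
  linear_combination (sin t ^ 2 + cos t ^ 2) * hn + sin_sq_add_cos_sq t

theorem rotatingDirector_add_two_pi (n₁ n₂ t : ℝ) :
    rotatingDirector n₁ n₂ (t + 2 * π) = rotatingDirector n₁ n₂ t := by
  simp only [rotatingDirector, cos_add_two_pi, sin_add_two_pi]

theorem Wmat_transpose : Wmatᵀ = -Wmat := by
  ext i j
  fin_cases i <;> fin_cases j <;> simp [Wmat]

theorem Wmat_mulVec (v : Fin 3 → ℝ) : Wmat *ᵥ v = ![v 1, -v 0, 0] := by
  ext k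
  fin_cases k <;> simp [Wmat, mulVec, dotProduct, Fin.sum_univ_three]

theorem hasDerivAt_rotatingDirector (n₁ n₂ t : ℝ) (k : Fin 3) :
    HasDerivAt (fun u => rotatingDirector n₁ n₂ u k)
      ((Wmat *ᵥ rotatingDirector n₁ n₂ t) k) t := by
  have hcos := hasDerivAt_cos t
  have hsin := hasDerivAt_sin t
  rw [Wmat_mulVec]
  match k with
  | 0 => exact ((hcos.const_mul n₁).add (hsin.const_mul n₂)).congr_deriv (by
      simp [rotatingDirector])
  | 1 => exact ((hsin.const_mul (-n₁)).add (hcos.const_mul n₂)).congr_deriv (by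
      simp [rotatingDirector]; ring)
  | 2 => exact hasDerivAt_const t (0 : ℝ)

theorem stmt9_general (a b c : ℝ) (hc : 0 < c) (hdisc : 0 < b ^ 2 - 24 * a * c)
    (s : ℝ)
    (hs : s = (b + Real.sqrt (b ^ 2 - 24 * a * c)) / (4 * c) ∨
          s = (b - Real.sqrt (b ^ 2 - 24 * a * c)) / (4 * c))
    (n₁ n₂ : ℝ) (hn : n₁ ^ 2 + n₂ ^ 2 = 1)
    (n : ℝ → Fin 3 → ℝ)
    (hn' : ∀ t, n t = ![n₁ * Real.cos t + n₂ * Real.sin t,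
                       -n₁ * Real.sin t + n₂ * Real.cos t, 0])
    (Q : ℝ → Matrix (Fin 3) (Fin 3) ℝ)
    (hQ : ∀ t, Q t = s • (Matrix.of (fun i j => n t i * n t j)
      - (1 / 3 : ℝ) • (1 : Matrix (Fin 3) (Fin 3) ℝ))) :
    (∀ t : ℝ, ∀ i j : Fin 3, HasDerivAt (fun u => Q u i j)
      ((Wmat * Q t - Q t * Wmat - gradF a b c (Q t)) i j) t) ∧
    (∀ t : ℝ, Q (t + 2 * Real.pi) = Q t) := by
  obtain rfl : n = rotatingDirector n₁ n₂ := funext hn'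
  obtain rfl : Q = fun t => s • (vecMulVec (rotatingDirector n₁ n₂ t)
      (rotatingDirector n₁ n₂ t) - (1 / 3 : ℝ) • 1) := funext hQ
  have hroot := two_mul_sq_sub_mul_add_three_mul_eq_zero hc.ne' hdisc.le hs
  refine ⟨fun t i j => ?_, fun t => by simp only [rotatingDirector_add_two_pi]⟩
  have hunit := rotatingDirector_dotProduct_self hn t
  rw [gradF_smul_sub_third_eq_zero (vecMulVec_self_mul_self hunit)
    (by rw [trace_vecMulVec, hunit]) hroot, sub_zero, commutator_smul_sub_smul_one,
    mul_vecMulVec_self_sub_of_transpose_eq_neg Wmat_transpose]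
  exact ((hasDerivAt_vecMulVec_self_apply (hasDerivAt_rotatingDirector n₁ n₂ t) i j).sub_const
    _).const_mul s

theorem stmt9 (a b c : ℝ) (hb : 0 < b) (hc : 0 < c) (hdisc : 0 < b ^ 2 - 24 * a * c)
    (s : ℝ)
    (hs : s = (b + Real.sqrt (b ^ 2 - 24 * a * c)) / (4 * c) ∨
          s = (b - Real.sqrt (b ^ 2 - 24 * a * c)) / (4 * c))
    (n₁ n₂ : ℝ) (hn : n₁ ^ 2 + n₂ ^ 2 = 1)
    (n : ℝ → Fin 3 → ℝ)
    (hn' : ∀ t, n t = ![n₁ * Real.cos t + n₂ * Real.sin t,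
                       -n₁ * Real.sin t + n₂ * Real.cos t, 0])
    (Q : ℝ → Matrix (Fin 3) (Fin 3) ℝ)
    (hQ : ∀ t, Q t = s • (Matrix.of (fun i j => n t i * n t j)
      - (1 / 3 : ℝ) • (1 : Matrix (Fin 3) (Fin 3) ℝ))) :
    (∀ t : ℝ, ∀ i j : Fin 3, HasDerivAt (fun u => Q u i j)
      ((Wmat * Q t - Q t * Wmat - gradF a b c (Q t)) i j) t) ∧
    (∀ t : ℝ, Q (t + 2 * Real.pi) = Q t) :=
  stmt9_general a b c hc hdisc s hs n₁ n₂ hn n hn' Q hQ
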